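/- arXiv:2406.08360 — 2 statements merged into one kernel-verified Lean document; each statement's English description precedes it below -/
import Mathlib

section
/- Necessary condition for conclusive k-state exclusion: Let {ρ_x}_{x=1}^N be density operators on ℂ^d, and suppose there exists a POVM {S_Y} indexed by the k-element subsets Y of {1,…,N} (i.e., S_Y ≥ 0 and ∑_Y S_Y = I) such that tr(S_Y ρ_y) = 0 for every Y and every y ∈ Y. Then ∑_{x=1}^N Π_x ≤ (N−k) I, where Π_x is the projection onto the support of ρ_x. -/
open Matrix ComplexOrder

/-- `P` is the orthogonal projection onto the support (range) of `σ`. -/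
def IsSupportProjection {d : ℕ} (σ P : Matrix (Fin d) (Fin d) ℂ) : Prop :=
  P.IsHermitian ∧ P * P = P ∧
    LinearMap.range P.mulVecLin = LinearMap.range σ.mulVecLin

/-!
Let `A x = ∑_{Y ∋ x} S Y`. Positive semidefinite operators whose product has zero trace multiply
to zero, so `ρ x * S Y = 0` for `x ∈ Y`; since the support projection factors as `ρ x * Z`, also
`P x * A x = 0`. As `A x ≤ 1`, compressing `1 - A x` by `1 - P x` gives `1 - P x - A x ≥ 0`.
Every `Y` has `k` elements, so `∑ x, A x = k • 1`, and summing over `x` gives the claim.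
-/

namespace Matrix

variable {𝕜 : Type*} [RCLike 𝕜] {n : Type*} [Fintype n]

theorem PosSemidef.mul_eq_zero_of_trace_mul_eq_zero {A B : Matrix n n 𝕜} (hA : A.PosSemidef)
    (hB : B.PosSemidef) (h : (A * B).trace = 0) : A * B = 0 := by
  classical
  obtain ⟨C, rfl⟩ : ∃ C : Matrix n n 𝕜, A = Cᴴ * C := by
    open scoped MatrixOrder in exact CStarAlgebra.nonneg_iff_eq_star_mul_self.mp hA.nonneg
  obtain ⟨D, rfl⟩ : ∃ D : Matrix n n 𝕜, B = Dᴴ * D := by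
    open scoped MatrixOrder in exact CStarAlgebra.nonneg_iff_eq_star_mul_self.mp hB.nonneg
  have hCD : C * Dᴴ = 0 := by
    rw [← trace_conjTranspose_mul_self_eq_zero_iff, conjTranspose_mul,
      conjTranspose_conjTranspose, Matrix.mul_assoc, trace_mul_comm]
    simpa only [Matrix.mul_assoc] using h
  rw [Matrix.mul_assoc, ← Matrix.mul_assoc C, hCD, Matrix.zero_mul, Matrix.mul_zero]

theorem exists_mul_eq_of_range_le {R m l : Type*} [CommSemiring R] [Fintype l] [DecidableEq l]
    {A : Matrix m n R} {B : Matrix m l R}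
    (h : LinearMap.range B.mulVecLin ≤ LinearMap.range A.mulVecLin) :
    ∃ Z : Matrix n l R, A * Z = B := by
  choose z hz using fun j => h ⟨Pi.single j 1, rfl⟩
  refine ⟨(of z)ᵀ, ?_⟩
  ext i j
  simpa [mulVec, dotProduct, mul_apply, Pi.single_apply] using congrFun (hz j) i

variable [DecidableEq n]

theorem PosSemidef.one_sub_sub_of_mul_eq_zero {P A : Matrix n n 𝕜} (hA : (1 - A).PosSemidef)
    (hP : P.IsHermitian) (hPP : P * P = P) (hPA : P * A = 0) : (1 - P - A).PosSemidef := by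
  have hAherm : A.IsHermitian := by simpa using isHermitian_one.sub hA.isHermitian
  have hAP : A * P = 0 := by
    simpa [conjTranspose_mul, hAherm.eq, hP.eq] using congrArg (·ᴴ) hPA
  have hconj : (1 - P) * (1 - A) * (1 - P) = 1 - P - A := by
    simp only [Matrix.sub_mul, Matrix.mul_sub, Matrix.one_mul, Matrix.mul_one, hPA, hAP, hPP,
      sub_zero]
    abel
  have hQ : (1 - P)ᴴ = 1 - P := by rw [conjTranspose_sub, conjTranspose_one, hP.eq]
  have := hA.mul_mul_conjTranspose_same (1 - P)
  rwa [hQ, hconj] at this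

end Matrix

theorem Finset.sum_sum_filter_mem_of_card_eq {α M : Type*} [Fintype α] [DecidableEq α]
    [AddCommMonoid M] {s : Finset (Finset α)} {k : ℕ} (hs : ∀ Y ∈ s, Y.card = k)
    (f : Finset α → M) :
    ∑ x, ∑ Y ∈ s with x ∈ Y, f Y = k • ∑ Y ∈ s, f Y := by
  simp only [Finset.sum_filter]
  rw [Finset.sum_comm, Finset.smul_sum]
  refine Finset.sum_congr rfl fun Y hY => ?_
  rw [Finset.sum_ite_mem, Finset.univ_inter, Finset.sum_const, hs Y hY]

theorem IsSupportProjection.mul_eq_zero_of_mul_eq_zero {d : ℕ} {m : Type*}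
    {σ P : Matrix (Fin d) (Fin d) ℂ} {M : Matrix (Fin d) m ℂ} (hP : IsSupportProjection σ P)
    (hσ : σ.IsHermitian) (h : σ * M = 0) : P * M = 0 := by
  obtain ⟨Z, hZ⟩ := exists_mul_eq_of_range_le hP.2.2.le
  calc P * M = (σ * Z)ᴴ * M := by rw [hZ, hP.1.eq]
    _ = Zᴴ * (σ * M) := by rw [conjTranspose_mul, hσ.eq, Matrix.mul_assoc]
    _ = 0 := by rw [h, Matrix.mul_zero]

open Finset in
theorem k_state_exclusion_necessary_general {d N k : ℕ}
    (hkN : k < N)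
    (ρ : Fin N → Matrix (Fin d) (Fin d) ℂ)
    (hρ : ∀ x, (ρ x).PosSemidef ∧ (ρ x).trace = 1)
    (P : Fin N → Matrix (Fin d) (Fin d) ℂ)
    (hP : ∀ x, IsSupportProjection (ρ x) (P x))
    (S : Finset (Fin N) → Matrix (Fin d) (Fin d) ℂ)
    (hSpos : ∀ Y : Finset (Fin N), Y.card = k → (S Y).PosSemidef)
    (hSsum : ∑ Y ∈ Finset.univ.filter (fun Y : Finset (Fin N) => Y.card = k), S Y = 1)
    (hexcl : ∀ Y : Finset (Fin N), Y.card = k → ∀ y ∈ Y, (S Y * ρ y).trace = 0) :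
    ((((N - k : ℕ) : ℂ) • (1 : Matrix (Fin d) (Fin d) ℂ)) - ∑ x, P x).PosSemidef := by
  set 𝒴 := univ.filter fun Y : Finset (Fin N) => Y.card = k
  have hcard : ∀ Y ∈ 𝒴, Y.card = k := fun Y hY => (mem_filter.1 hY).2
  set A : Fin N → Matrix (Fin d) (Fin d) ℂ := fun x => ∑ Y ∈ 𝒴 with x ∈ Y, S Y
  have hPA : ∀ x, P x * A x = 0 := fun x => by
    refine (Matrix.mul_sum ..).trans (sum_eq_zero fun Y hY => ?_)
    obtain ⟨hY, hxY⟩ := mem_filter.1 hY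
    have hρS : ρ x * S Y = 0 := (hρ x).1.mul_eq_zero_of_trace_mul_eq_zero (hSpos Y (hcard Y hY))
      (by rw [trace_mul_comm, hexcl Y (hcard Y hY) x hxY])
    exact (hP x).mul_eq_zero_of_mul_eq_zero (hρ x).1.isHermitian hρS
  have hA_le_one : ∀ x, (1 - A x).PosSemidef := fun x => by
    rw [← hSsum, ← sum_filter_add_sum_filter_not 𝒴 (x ∈ ·), add_sub_cancel_left]
    exact posSemidef_sum _ fun Y hY => hSpos Y (hcard Y (mem_filter.1 hY).1)
  have hsumA : ∑ x, A x = k • 1 := (sum_sum_filter_mem_of_card_eq hcard S).trans (by rw [hSsum])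
  have hsum : ((N - k : ℕ) : ℂ) • (1 : Matrix (Fin d) (Fin d) ℂ) - ∑ x, P x
      = ∑ x, (1 - P x - A x) := by
    rw [sum_sub_distrib, sum_sub_distrib, hsumA, sum_const, card_univ, Fintype.card_fin,
      Nat.cast_sub hkN.le, sub_smul, Nat.cast_smul_eq_nsmul, Nat.cast_smul_eq_nsmul]
    abel
  rw [hsum]
  exact posSemidef_sum _ fun x _ =>
    (hA_le_one x).one_sub_sub_of_mul_eq_zero (hP x).1 (hP x).2.1 (hPA x)

/-- Necessary condition for conclusive `k`-state exclusion:
if a POVM `{S_Y}` indexed by the `k`-element subsets of `{1,…,N}` satisfies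
`tr(S_Y ρ_y) = 0` for all `Y` and `y ∈ Y`, then `∑ₓ Πₓ ≤ (N−k)·I`. -/
theorem k_state_exclusion_necessary {d N k : ℕ}
    (hk : 1 ≤ k) (hkN : k < N)
    (ρ : Fin N → Matrix (Fin d) (Fin d) ℂ)
    (hρ : ∀ x, (ρ x).PosSemidef ∧ (ρ x).trace = 1)
    (P : Fin N → Matrix (Fin d) (Fin d) ℂ)
    (hP : ∀ x, IsSupportProjection (ρ x) (P x))
    (S : Finset (Fin N) → Matrix (Fin d) (Fin d) ℂ)
    (hSpos : ∀ Y : Finset (Fin N), Y.card = k → (S Y).PosSemidef)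
    (hSsum : ∑ Y ∈ Finset.univ.filter (fun Y : Finset (Fin N) => Y.card = k), S Y = 1)
    (hexcl : ∀ Y : Finset (Fin N), Y.card = k → ∀ y ∈ Y, (S Y * ρ y).trace = 0) :
    ((((N - k : ℕ) : ℂ) • (1 : Matrix (Fin d) (Fin d) ℂ)) - ∑ x, P x).PosSemidef :=
  k_state_exclusion_necessary_general hkN ρ hρ P hP S hSpos hSsum hexcl
end

section
/- Unital channels are rank non-decreasing: if ℰ is a unital quantum channel on d×d matrices (ℰ(I) = I, CPTP) and ρ is a density operator, then rank(ℰ(ρ)) ≥ rank(ρ). -/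
/-! If `P` is the support projection of `ρ`, then `c • P ≤ ρ` for some `c > 0`, hence
`c • ℰ P ≤ ℰ ρ` and `rank (ℰ P) ≤ rank (ℰ ρ)`. As `ℰ` is positive and unital, `0 ≤ ℰ P ≤ 1`, so
the eigenvalues of `ℰ P` lie in `[0, 1]`; as `ℰ` is trace preserving they sum to
`tr P = rank ρ`, so at least `rank ρ` of them are nonzero.
Positivity of `ℰ` is read off its Choi matrix `C`: `y* ℰ(x x*) y = d ⟨y ⊗ x̄, C (y ⊗ x̄)⟩`. -/

open Matrix ComplexOrder

/-- The normalized maximally entangled vector `|Φ⁺⟩ = (1/√d)∑ᵢ|i⟩⊗|i⟩`. -/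
noncomputable def maxEnt (d : ℕ) : Fin d × Fin d → ℂ :=
  fun p => if p.1 = p.2 then (1 / Real.sqrt d : ℝ) else 0

/-- The density matrix `|Φ⁺⟩⟨Φ⁺|`. -/
noncomputable def maxEntProj (d : ℕ) : Matrix (Fin d × Fin d) (Fin d × Fin d) ℂ :=
  vecMulVec (maxEnt d) (star (maxEnt d))

/-- `(𝒩 ⊗ id)(M)` for a linear map `𝒩` on `d×d` matrices. -/
noncomputable def tensorId {d : ℕ}
    (𝒩 : Matrix (Fin d) (Fin d) ℂ →ₗ[ℂ] Matrix (Fin d) (Fin d) ℂ)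
    (M : Matrix (Fin d × Fin d) (Fin d × Fin d) ℂ) :
    Matrix (Fin d × Fin d) (Fin d × Fin d) ℂ :=
  fun p q => ∑ c : Fin d, ∑ c' : Fin d,
    (𝒩 (Matrix.single c c' 1)) p.1 q.1 * M (c, p.2) (c', q.2)

namespace Matrix

open scoped MatrixOrder

section Rank

variable {𝕜 : Type*} [RCLike 𝕜] {n : Type*} [Fintype n]

theorem ker_mulVecLin_le_of_nonneg_of_le {A B : Matrix n n 𝕜} (hB : 0 ≤ B) (hBA : B ≤ A) :
    LinearMap.ker A.mulVecLin ≤ LinearMap.ker B.mulVecLin := by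
  intro x hx
  rw [LinearMap.mem_ker, mulVecLin_apply] at hx ⊢
  have hB' := nonneg_iff_posSemidef.mp hB
  have hle := (le_iff.mp hBA).dotProduct_mulVec_nonneg x
  rw [sub_mulVec, hx, dotProduct_sub, dotProduct_zero, zero_sub, neg_nonneg] at hle
  exact (hB'.dotProduct_mulVec_zero_iff x).mp (le_antisymm hle (hB'.dotProduct_mulVec_nonneg x))

theorem rank_le_rank_of_nonneg_of_le {A B : Matrix n n 𝕜} (hB : 0 ≤ B) (hBA : B ≤ A) :
    B.rank ≤ A.rank := by
  have := Submodule.finrank_mono (ker_mulVecLin_le_of_nonneg_of_le hB hBA)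
  have := A.mulVecLin.finrank_range_add_finrank_ker
  have := B.mulVecLin.finrank_range_add_finrank_ker
  unfold rank
  omega

theorem rank_real_smul {c : ℝ} (hc : c ≠ 0) (A : Matrix n n 𝕜) : (c • A).rank = A.rank := by
  rw [RCLike.real_smul_eq_coe_smul (K := 𝕜)]
  exact rank_smul_of_mem_nonZeroDivisors A
    (mem_nonZeroDivisors_of_ne_zero (RCLike.ofReal_ne_zero.mpr hc))

variable [DecidableEq n]

theorem re_trace_le_rank_of_nonneg_of_le_one {A : Matrix n n 𝕜} (h0 : 0 ≤ A) (h1 : A ≤ 1) :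
    RCLike.re A.trace ≤ A.rank := by
  have hA := (nonneg_iff_posSemidef.mp h0).isHermitian
  have hle : ∀ i, hA.eigenvalues i ≤ 1 := fun i =>
    (CFC.le_one_iff A).mp h1 _ (hA.eigenvalues_mem_spectrum_real i)
  rw [hA.trace_eq_sum_eigenvalues, hA.rank_eq_card_non_zero_eigs, Fintype.card_subtype]
  simp only [map_sum, RCLike.ofReal_re]
  calc ∑ i, hA.eigenvalues i = ∑ i with hA.eigenvalues i ≠ 0, hA.eigenvalues i :=
        (Finset.sum_filter_ne_zero _).symm
    _ ≤ ∑ i with hA.eigenvalues i ≠ 0, 1 := Finset.sum_le_sum fun i _ => hle i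
    _ = _ := by simp

noncomputable def supportProj (A : Matrix n n 𝕜) : Matrix n n 𝕜 :=
  cfc (fun x : ℝ => if x = 0 then 0 else 1) A

theorem supportProj_nonneg (A : Matrix n n 𝕜) : 0 ≤ A.supportProj :=
  cfc_nonneg fun x _ => by split_ifs <;> norm_num

theorem supportProj_le_one (A : Matrix n n 𝕜) : A.supportProj ≤ 1 :=
  cfc_le_one _ _ fun x _ => by split_ifs <;> norm_num

theorem IsHermitian.trace_supportProj {A : Matrix n n 𝕜} (hA : A.IsHermitian) :
    A.supportProj.trace = A.rank := by
  rw [supportProj, hA.cfc_eq, IsHermitian.cfc, Unitary.conjStarAlgAut_apply, trace_mul_cycle,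
    Unitary.coe_star_mul_self, one_mul, trace_diagonal, hA.rank_eq_card_non_zero_eigs,
    Fintype.card_subtype]
  simp [Finset.sum_ite]

theorem exists_pos_smul_supportProj_le {A : Matrix n n 𝕜} (hA : 0 ≤ A) :
    ∃ c : ℝ, 0 < c ∧ c • A.supportProj ≤ A := by
  -- the spectrum is finite, so its nonzero part stays a positive distance away from `0`
  have hopen : (spectrum ℝ A \ {0})ᶜ ∈ nhds (0 : ℝ) :=
    A.finite_real_spectrum.sdiff.isClosed.isOpen_compl.mem_nhds (by simp)
  obtain ⟨c, hc, hball⟩ := Metric.mem_nhds_iff.mp hopen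
  refine ⟨c, hc, ?_⟩
  have hcont : ∀ f : ℝ → ℝ, ContinuousOn f (spectrum ℝ A) := A.finite_real_spectrum.continuousOn
  rw [supportProj, ← cfc_smul c _ A (hcont _)]
  conv_rhs => rw [← cfc_id' ℝ A]
  refine cfc_mono (hf := hcont _) fun x hx => ?_
  split_ifs with h
  · simp [h]
  · have : x ∉ Metric.ball 0 c := fun hxc => hball hxc ⟨hx, h⟩
    have := spectrum_nonneg_of_nonneg hA hx
    simp_all [abs_of_nonneg]

theorem rank_le_rank_map_of_posSemidef (Φ : Matrix n n 𝕜 →ₗ[𝕜] Matrix n n 𝕜)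
    (hpos : ∀ M, M.PosSemidef → (Φ M).PosSemidef) (htrace : ∀ M, (Φ M).trace = M.trace)
    (hunital : Φ 1 = 1) {ρ : Matrix n n 𝕜} (hρ : ρ.PosSemidef) : ρ.rank ≤ (Φ ρ).rank := by
  let Φₚ := PositiveLinearMap.mk₀ Φ fun M hM =>
    nonneg_iff_posSemidef.mpr (hpos M (nonneg_iff_posSemidef.mp hM))
  obtain ⟨c, hc, hcP⟩ := exists_pos_smul_supportProj_le (nonneg_iff_posSemidef.mpr hρ)
  have h0 : 0 ≤ Φ ρ.supportProj := Φₚ.map_nonneg (supportProj_nonneg ρ)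
  have h1 : Φ ρ.supportProj ≤ 1 := hunital ▸ Φₚ.monotone (supportProj_le_one ρ)
  have hcle : c • Φ ρ.supportProj ≤ Φ ρ := by
    rw [← LinearMap.map_smul_of_tower]
    exact Φₚ.monotone hcP
  have htr : RCLike.re (Φ ρ.supportProj).trace = ρ.rank := by
    rw [htrace, hρ.isHermitian.trace_supportProj, RCLike.natCast_re]
  calc ρ.rank ≤ (Φ ρ.supportProj).rank := by
        exact_mod_cast htr ▸ re_trace_le_rank_of_nonneg_of_le_one h0 h1
    _ = (c • Φ ρ.supportProj).rank := (rank_real_smul hc.ne' _).symm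
    _ ≤ (Φ ρ).rank := rank_le_rank_of_nonneg_of_le (smul_nonneg hc.le h0) hcle

end Rank

-- a complex matrix with real quadratic form is automatically Hermitian
theorem posSemidef_of_dotProduct_mulVec_nonneg {n : Type*} [Fintype n] [DecidableEq n]
    {M : Matrix n n ℂ} (hM : ∀ x, 0 ≤ star x ⬝ᵥ (M *ᵥ x)) : M.PosSemidef := by
  rw [← isPositive_toEuclideanLin_iff, LinearMap.isPositive_iff_complex]
  intro x
  have hx := Complex.nonneg_iff.mp (hM x.ofLp)
  have h : inner ℂ (toEuclideanLin M x) x = star (star x.ofLp ⬝ᵥ (M *ᵥ x.ofLp)) := by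
    rw [EuclideanSpace.inner_eq_star_dotProduct, toLpLin_apply, star_dotProduct, star_star,
      dotProduct_comm]
  rw [h]
  exact ⟨Complex.ext (by simp) (by simp [← hx.2]), by simpa using hx.1⟩

end Matrix

section Choi

variable {d : ℕ} (ℰ : Matrix (Fin d) (Fin d) ℂ →ₗ[ℂ] Matrix (Fin d) (Fin d) ℂ)

theorem tensorId_maxEntProj_apply (p a q b : Fin d) :
    tensorId ℰ (maxEntProj d) (p, a) (q, b) = (d : ℂ)⁻¹ * ℰ (single a b 1) p q := by
  have hsq : ((1 / √d : ℝ) : ℂ) * ((1 / √d : ℝ) : ℂ) = (d : ℂ)⁻¹ := by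
    rw [← Complex.ofReal_mul, div_mul_div_comm, one_mul, Real.mul_self_sqrt d.cast_nonneg, one_div,
      Complex.ofReal_inv, Complex.ofReal_natCast]
  simp only [tensorId, maxEntProj, maxEnt, vecMulVec_apply, Pi.star_apply, apply_ite star,
    star_zero, Complex.star_def, Complex.conj_ofReal, mul_ite, ite_mul, zero_mul, mul_zero, hsq]
  simp [Finset.sum_ite_eq', mul_comm]

theorem map_apply_eq_sum_tensorId_maxEntProj (M : Matrix (Fin d) (Fin d) ℂ) (p q : Fin d) :
    ℰ M p q = d * ∑ a, ∑ b, M a b * tensorId ℰ (maxEntProj d) (p, a) (q, b) := by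
  have hd : (d : ℂ) ≠ 0 := Nat.cast_ne_zero.mpr p.pos.ne'
  conv_lhs => rw [matrix_eq_sum_single M]
  simp only [tensorId_maxEntProj_apply, map_sum, Matrix.sum_apply, Finset.mul_sum]
  refine Finset.sum_congr rfl fun a _ => Finset.sum_congr rfl fun b _ => ?_
  rw [show single a b (M a b) = M a b • single a b 1 by simp [smul_single], map_smul,
    Matrix.smul_apply, smul_eq_mul]
  field_simp

theorem dotProduct_mulVec_map_vecMulVec (x y : Fin d → ℂ) :
    star y ⬝ᵥ (ℰ (vecMulVec x (star x)) *ᵥ y) =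
      d * (star (fun u : Fin d × Fin d => y u.1 * star (x u.2)) ⬝ᵥ
        (tensorId ℰ (maxEntProj d) *ᵥ fun u => y u.1 * star (x u.2))) := by
  simp only [dotProduct, mulVec, Fintype.sum_prod_type, map_apply_eq_sum_tensorId_maxEntProj ℰ,
    vecMulVec_apply, Pi.star_apply, Finset.mul_sum, Finset.sum_mul, star_mul', star_star]
  refine Finset.sum_congr rfl fun p _ => ?_
  rw [Finset.sum_comm]
  refine Finset.sum_congr rfl fun a _ => Finset.sum_congr rfl fun q _ =>
    Finset.sum_congr rfl fun b _ => ?_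
  ring

theorem posSemidef_map_of_posSemidef_tensorId_maxEntProj
    (hCP : (tensorId ℰ (maxEntProj d)).PosSemidef) {M : Matrix (Fin d) (Fin d) ℂ}
    (hM : M.PosSemidef) : (ℰ M).PosSemidef := by
  obtain ⟨m, v, rfl⟩ := posSemidef_iff_eq_sum_vecMulVec.mp hM
  rw [map_sum]
  refine posSemidef_sum _ fun i _ => posSemidef_of_dotProduct_mulVec_nonneg fun y => ?_
  rw [dotProduct_mulVec_map_vecMulVec]
  exact mul_nonneg (Nat.cast_nonneg d) (hCP.dotProduct_mulVec_nonneg _)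

end Choi

theorem unital_channel_rank_nondecreasing_general {d : ℕ}
    (ℰ : Matrix (Fin d) (Fin d) ℂ →ₗ[ℂ] Matrix (Fin d) (Fin d) ℂ)
    (hCP : (tensorId ℰ (maxEntProj d)).PosSemidef)
    (hTP : ∀ ρ : Matrix (Fin d) (Fin d) ℂ, (ℰ ρ).trace = ρ.trace)
    (hUnital : ℰ (1 : Matrix (Fin d) (Fin d) ℂ) = 1)
    (ρ : Matrix (Fin d) (Fin d) ℂ) (hρ : ρ.PosSemidef) :
    (ℰ ρ).rank ≥ ρ.rank :=
  rank_le_rank_map_of_posSemidef ℰ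
    (fun _ => posSemidef_map_of_posSemidef_tensorId_maxEntProj ℰ hCP) hTP hUnital hρ

/-- Unital channels are rank non-decreasing: if `ℰ` is completely positive
(positive semidefinite Choi state), trace preserving and unital, then
`rank(ℰ(ρ)) ≥ rank(ρ)` for every density operator `ρ`. -/
theorem unital_channel_rank_nondecreasing {d : ℕ} (hd : 0 < d)
    (ℰ : Matrix (Fin d) (Fin d) ℂ →ₗ[ℂ] Matrix (Fin d) (Fin d) ℂ)
    (hCP : (tensorId ℰ (maxEntProj d)).PosSemidef)
    (hTP : ∀ ρ : Matrix (Fin d) (Fin d) ℂ, (ℰ ρ).trace = ρ.trace)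
    (hUnital : ℰ (1 : Matrix (Fin d) (Fin d) ℂ) = 1)
    (ρ : Matrix (Fin d) (Fin d) ℂ) (hρ : ρ.PosSemidef) (hρtr : ρ.trace = 1) :
    (ℰ ρ).rank ≥ ρ.rank :=
  unital_channel_rank_nondecreasing_general ℰ hCP hTP hUnital ρ hρ
end
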